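/- Let Q₁, …, Q_m : [−1,1] → ℝ, r ∈ ℕ₀, and suppose each Q_i satisfies |χ(x) − Q_i(x)| ≤ c·ψ(x)^μ for a function ψ with 0 < ψ ≤ 1 and a {0,1}-valued function χ. Define R(x) := 1 − ∏_{i=1}^m (1 − Q_i(x))^(r+1). Then |χ(x) − R(x)| ≤ c(m, r, c)·ψ(x)^μ for all x ∈ [−1,1]. Moreover, if Q_{i₀}(b) = 1 for some i₀ then R(b) = 1, and if Q_i(a) = 0 and Q_i'(a) = … = Q_i^{(r)}(a) = 0 for all i (with Q_i smooth) then R(a) = 0 and R'(a) = … = R^{(r)}(a) = 0. -/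

import Mathlib

open Set
open scoped ContDiff

private lemma pow_sub_one_bound (n : ℕ) (x K : ℝ) (hK : 1 ≤ K) (hx : |x| ≤ K) :
    |x ^ n - 1| ≤ n * K ^ n * |x - 1| := by
  have h := geom_sum_mul x n
  have hS : |∑ i ∈ Finset.range n, x ^ i| ≤ n * K ^ n := by
    calc |∑ i ∈ Finset.range n, x ^ i| ≤ ∑ i ∈ Finset.range n, |x ^ i| :=
          Finset.abs_sum_le_sum_abs _ _
      _ ≤ ∑ _i ∈ Finset.range n, K ^ n := by
          apply Finset.sum_le_sum
          intro i hi
          rw [abs_pow]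
          calc |x| ^ i ≤ K ^ i := pow_le_pow_left₀ (abs_nonneg x) hx i
            _ ≤ K ^ n := pow_le_pow_right₀ hK (Finset.mem_range.mp hi).le
      _ = n * K ^ n := by rw [Finset.sum_const, Finset.card_range, nsmul_eq_mul]
  calc |x ^ n - 1| = |∑ i ∈ Finset.range n, x ^ i| * |x - 1| := by rw [← abs_mul, h]
    _ ≤ n * K ^ n * |x - 1| := mul_le_mul_of_nonneg_right hS (abs_nonneg _)

private lemma prod_sub_one_bound {ι : Type*} (K : ℝ) (hK : 1 ≤ K) (s : Finset ι) (a : ι → ℝ)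
    (ha : ∀ i ∈ s, |a i| ≤ K) :
    |∏ i ∈ s, a i - 1| ≤ K ^ s.card * ∑ i ∈ s, |a i - 1| := by
  induction s using Finset.cons_induction with
  | empty => simp
  | cons j s hj ih =>
    have haj : |a j| ≤ K := ha j (Finset.mem_cons_self j s)
    have ih' := ih (fun i hi => ha i (Finset.mem_cons_of_mem hi))
    have hKc : (1:ℝ) ≤ K ^ s.card := one_le_pow₀ hK
    have hsum : (0:ℝ) ≤ ∑ i ∈ s, |a i - 1| := Finset.sum_nonneg fun i _ => abs_nonneg _
    rw [Finset.prod_cons, Finset.sum_cons, Finset.card_cons]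
    have key : |a j * ∏ i ∈ s, a i - 1| ≤ |a j| * |∏ i ∈ s, a i - 1| + |a j - 1| := by
      have : a j * ∏ i ∈ s, a i - 1 = a j * (∏ i ∈ s, a i - 1) + (a j - 1) := by ring
      rw [this]
      calc |a j * (∏ i ∈ s, a i - 1) + (a j - 1)| ≤ |a j * (∏ i ∈ s, a i - 1)| + |a j - 1| :=
            abs_add_le _ _
        _ = |a j| * |∏ i ∈ s, a i - 1| + |a j - 1| := by rw [abs_mul]
    calc |a j * ∏ i ∈ s, a i - 1| ≤ |a j| * |∏ i ∈ s, a i - 1| + |a j - 1| := key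
      _ ≤ K * (K ^ s.card * ∑ i ∈ s, |a i - 1|) + K ^ s.card * |a j - 1| := by
          apply add_le_add
          · exact mul_le_mul haj ih' (abs_nonneg _) (le_trans zero_le_one hK)
          · nlinarith [abs_nonneg (a j - 1)]
      _ ≤ K ^ (s.card + 1) * (|a j - 1| + ∑ i ∈ s, |a i - 1|) := by
          rw [pow_succ]
          have h1 : 0 ≤ K ^ s.card * |a j - 1| * (K - 1) :=
            mul_nonneg (mul_nonneg (by positivity) (abs_nonneg _)) (by linarith)
          nlinarith [h1]

private lemma iterDeriv_add' (f g : ℝ → ℝ) (hf : ContDiff ℝ ∞ f) (hg : ContDiff ℝ ∞ g)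
    (n : ℕ) (x : ℝ) :
    iteratedDeriv n (fun y => f y + g y) x = iteratedDeriv n f x + iteratedDeriv n g x := by
  simp_rw [← iteratedDerivWithin_univ]
  exact iteratedDerivWithin_add (Set.mem_univ x) uniqueDiffOn_univ
    ((hf.of_le (m := (n : WithTop ℕ∞)) (by exact_mod_cast (le_top : (n:ℕ∞) ≤ ⊤))).contDiffWithinAt) ((hg.of_le (m := (n : WithTop ℕ∞)) (by exact_mod_cast (le_top : (n:ℕ∞) ≤ ⊤))).contDiffWithinAt)

/-- If all derivatives of `g` up to order `r` vanish at `a`, then the same holds for `g * h`. -/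
private lemma mul_vanish (a : ℝ) : ∀ (r : ℕ) (g h : ℝ → ℝ), ContDiff ℝ ∞ g → ContDiff ℝ ∞ h →
    (∀ ν, ν ≤ r → iteratedDeriv ν g a = 0) →
    ∀ ν, ν ≤ r → iteratedDeriv ν (fun x => g x * h x) a = 0 := by
  intro r
  induction r with
  | zero =>
    intro g h _ _ hvan ν hν
    interval_cases ν
    have h0 : g a = 0 := by simpa using hvan 0 le_rfl
    simp [iteratedDeriv_zero, h0]
  | succ r IH =>
    intro g h hg hh hvan ν hν
    match ν with
    | 0 =>
      have h0 : g a = 0 := by simpa using hvan 0 (Nat.zero_le _)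
      simp [iteratedDeriv_zero, h0]
    | k + 1 =>
      have hk : k ≤ r := Nat.lt_succ_iff.mp hν
      rw [iteratedDeriv_succ']
      have hg' : ContDiff ℝ ∞ (deriv g) := (contDiff_infty_iff_deriv.mp hg).2
      have hh' : ContDiff ℝ ∞ (deriv h) := (contDiff_infty_iff_deriv.mp hh).2
      have hd : deriv (fun x => g x * h x) = fun x => deriv g x * h x + g x * deriv h x := by
        funext x
        exact deriv_mul ((contDiff_infty_iff_deriv.mp hg).1.differentiableAt)
          ((contDiff_infty_iff_deriv.mp hh).1.differentiableAt)
      rw [hd]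
      have h1 : ∀ ν, ν ≤ r → iteratedDeriv ν (fun x => deriv g x * h x) a = 0 := by
        apply IH (deriv g) h hg' hh
        intro ν hν'
        have : iteratedDeriv ν (deriv g) a = iteratedDeriv (ν + 1) g a := by
          rw [iteratedDeriv_succ']
        rw [this]
        exact hvan (ν + 1) (Nat.succ_le_succ hν')
      have h2 : ∀ ν, ν ≤ r → iteratedDeriv ν (fun x => g x * deriv h x) a = 0 :=
        IH g (deriv h) hg hh' (fun ν hν' => hvan ν (hν'.trans (Nat.le_succ r)))
      rw [iterDeriv_add' _ _ ((hg'.mul hh)) (hg.mul hh') k a, h1 k hk, h2 k hk, add_zero]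

/-- the Boolean-sum-type combination
`R = 1 − ∏_{i=1}^m (1 − Q_i)^(r+1)`. If each `Q_i` approximates a `{0,1}`-valued
function `χ` with error `c·ψ^μ` (where `0 < ψ ≤ 1`), then `|χ − R| ≤ c'·ψ^μ`;
`R(b) = 1` whenever some `Q_{i₀}(b) = 1`; and if all `Q_i` are smooth and vanish
at `a` together with their derivatives up to order `r`, then so does `R`. -/
theorem stmt19 (m r μ : ℕ) (hm : 1 ≤ m) (c : ℝ) (hc : 0 < c)
    (χ ψ : ℝ → ℝ) (Q : Fin m → ℝ → ℝ)
    (hχ : ∀ x ∈ Icc (-1:ℝ) 1, χ x = 0 ∨ χ x = 1)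
    (hψ : ∀ x ∈ Icc (-1:ℝ) 1, 0 < ψ x ∧ ψ x ≤ 1)
    (hQ : ∀ i : Fin m, ∀ x ∈ Icc (-1:ℝ) 1, |χ x - Q i x| ≤ c * ψ x ^ μ) :
    ∀ R : ℝ → ℝ, (R = fun x => 1 - ∏ i : Fin m, (1 - Q i x) ^ (r + 1)) →
      (∃ c' : ℝ, 0 < c' ∧ ∀ x ∈ Icc (-1:ℝ) 1, |χ x - R x| ≤ c' * ψ x ^ μ) ∧
      (∀ b : ℝ, (∃ i₀ : Fin m, Q i₀ b = 1) → R b = 1) ∧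
      ((∀ i : Fin m, ContDiff ℝ (⊤ : ℕ∞) (Q i)) → ∀ a : ℝ,
        (∀ i : Fin m, ∀ ν : ℕ, ν ≤ r → iteratedDeriv ν (Q i) a = 0) →
        ∀ ν : ℕ, ν ≤ r → iteratedDeriv ν R a = 0) := by
  intro R hR
  set K : ℝ := 1 + c with hKdef
  have hK1 : (1:ℝ) ≤ K := by simp [hKdef]; linarith
  have hK0 : (0:ℝ) < K := lt_of_lt_of_le one_pos hK1
  refine ⟨?_, ?_, ?_⟩
  · -- approximation bound
    refine ⟨K ^ ((r+1)*m) * (1 + m * (r+1) * K^(r+1) * c), by positivity, ?_⟩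
    intro x hx
    obtain ⟨hψ0, hψ1⟩ := hψ x hx
    have hψμ0 : (0:ℝ) < ψ x ^ μ := pow_pos hψ0 μ
    have hψμ1 : ψ x ^ μ ≤ 1 := pow_le_one₀ hψ0.le hψ1
    rcases hχ x hx with h0 | h1
    · -- χ x = 0
      have hRx : |χ x - R x| = |∏ i : Fin m, (1 - Q i x) ^ (r + 1) - 1| := by
        rw [hR, h0]
        simp only [zero_sub]
        rw [abs_neg, abs_sub_comm]
      have hb : ∀ i : Fin m, |(1 - Q i x)| ≤ K := by
        intro i
        have := hQ i x hx
        rw [h0] at this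
        have hQi : |Q i x| ≤ c * ψ x ^ μ := by
          rwa [abs_sub_comm, sub_zero] at this
        have : |1 - Q i x| ≤ 1 + |Q i x| := by
          calc |1 - Q i x| ≤ |(1:ℝ)| + |Q i x| := abs_sub _ _
            _ = 1 + |Q i x| := by rw [abs_one]
        have hle : c * ψ x ^ μ ≤ c := by nlinarith
        linarith
      have hbp : ∀ i : Fin m, |(1 - Q i x) ^ (r + 1)| ≤ K ^ (r + 1) := by
        intro i
        rw [abs_pow]
        exact pow_le_pow_left₀ (abs_nonneg _) (hb i) _
      have key := prod_sub_one_bound (K ^ (r+1)) (one_le_pow₀ hK1) Finset.univ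
        (fun i : Fin m => (1 - Q i x) ^ (r + 1)) (fun i _ => hbp i)
      have hterm : ∀ i : Fin m, |(1 - Q i x) ^ (r + 1) - 1| ≤ (r+1) * K^(r+1) * (c * ψ x ^ μ) := by
        intro i
        have h1' := pow_sub_one_bound (r+1) (1 - Q i x) K hK1 (hb i)
        have hQi : |Q i x| ≤ c * ψ x ^ μ := by
          have := hQ i x hx
          rw [h0, abs_sub_comm, sub_zero] at this
          exact this
        have : |1 - Q i x - 1| = |Q i x| := by rw [show (1:ℝ) - Q i x - 1 = -(Q i x) by ring, abs_neg]
        rw [this] at h1'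
        calc |(1 - Q i x) ^ (r + 1) - 1| ≤ (r+1) * K^(r+1) * |Q i x| := by
              exact_mod_cast h1'
          _ ≤ (r+1) * K^(r+1) * (c * ψ x ^ μ) := by
              apply mul_le_mul_of_nonneg_left hQi
              positivity
      have hsum : ∑ i : Fin m, |(1 - Q i x) ^ (r + 1) - 1| ≤ m * ((r+1) * K^(r+1) * (c * ψ x ^ μ)) := by
        calc ∑ i : Fin m, |(1 - Q i x) ^ (r + 1) - 1|
            ≤ ∑ _i : Fin m, (r+1) * K^(r+1) * (c * ψ x ^ μ) :=
              Finset.sum_le_sum (fun i _ => hterm i)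
          _ = m * ((r+1) * K^(r+1) * (c * ψ x ^ μ)) := by
              rw [Finset.sum_const, Finset.card_univ, Fintype.card_fin, nsmul_eq_mul]
      rw [hRx]
      have hcard : (Finset.univ : Finset (Fin m)).card = m := by simp
      calc |∏ i : Fin m, (1 - Q i x) ^ (r + 1) - 1|
          ≤ (K ^ (r+1)) ^ (Finset.univ : Finset (Fin m)).card *
            ∑ i : Fin m, |(1 - Q i x) ^ (r + 1) - 1| := key
        _ ≤ (K ^ (r+1)) ^ m * (m * ((r+1) * K^(r+1) * (c * ψ x ^ μ))) := by
            rw [hcard]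
            apply mul_le_mul_of_nonneg_left hsum
            positivity
        _ = K ^ ((r+1)*m) * (m * (r+1) * K^(r+1) * c) * ψ x ^ μ := by
            rw [← pow_mul]
            ring
        _ ≤ K ^ ((r+1)*m) * (1 + m * (r+1) * K^(r+1) * c) * ψ x ^ μ := by
            have hKp : (0:ℝ) < K ^ ((r+1)*m) := pow_pos hK0 _
            nlinarith [hψμ0.le, hKp]
    · -- χ x = 1
      have hRx : |χ x - R x| = |∏ i : Fin m, (1 - Q i x) ^ (r + 1)| := by
        rw [hR, h1]
        simp only
        congr 1
        ring
      have hfac : ∀ i : Fin m, |1 - Q i x| ≤ c * ψ x ^ μ := by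
        intro i
        have := hQ i x hx
        rwa [h1] at this
      rw [hRx]
      have habs : |∏ i : Fin m, (1 - Q i x) ^ (r + 1)| = ∏ i : Fin m, |1 - Q i x| ^ (r+1) := by
        rw [Finset.abs_prod]
        simp [abs_pow]
      rw [habs]
      have hstep : ∏ i : Fin m, |1 - Q i x| ^ (r+1) ≤ (c * ψ x ^ μ) ^ ((r+1) * m) := by
        calc ∏ i : Fin m, |1 - Q i x| ^ (r+1) ≤ ∏ _i : Fin m, (c * ψ x ^ μ) ^ (r+1) := by
              apply Finset.prod_le_prod
              · intro i _; positivity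
              · intro i _
                exact pow_le_pow_left₀ (abs_nonneg _) (hfac i) _
          _ = ((c * ψ x ^ μ) ^ (r+1)) ^ m := by simp
          _ = (c * ψ x ^ μ) ^ ((r+1) * m) := by rw [← pow_mul]
      have hfin : (c * ψ x ^ μ) ^ ((r+1) * m) ≤ K ^ ((r+1)*m) * ψ x ^ μ := by
        have hN1 : 1 ≤ (r+1) * m := Nat.one_le_iff_ne_zero.mpr (by positivity)
        calc (c * ψ x ^ μ) ^ ((r+1) * m) = c ^ ((r+1)*m) * (ψ x ^ μ) ^ ((r+1)*m) := by
              rw [mul_pow]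
          _ ≤ K ^ ((r+1)*m) * ψ x ^ μ := by
              apply mul_le_mul
              · exact pow_le_pow_left₀ hc.le (by rw [hKdef]; linarith) _
              · calc (ψ x ^ μ) ^ ((r+1)*m) = ψ x ^ (μ * ((r+1)*m)) := by rw [← pow_mul]
                  _ ≤ ψ x ^ μ := pow_le_pow_of_le_one hψ0.le hψ1 (Nat.le_mul_of_pos_right μ (by positivity))
              · positivity
              · positivity
      calc ∏ i : Fin m, |1 - Q i x| ^ (r+1) ≤ K ^ ((r+1)*m) * ψ x ^ μ := hstep.trans hfin
        _ ≤ K ^ ((r+1)*m) * (1 + m * (r+1) * K^(r+1) * c) * ψ x ^ μ := by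
            have ht : (0:ℝ) ≤ (m:ℝ) * (r+1) * K^(r+1) * c := by positivity
            have h2 : K ^ ((r+1)*m) ≤ K ^ ((r+1)*m) * (1 + (m:ℝ) * (r+1) * K^(r+1) * c) := by
              nlinarith [mul_nonneg (pow_pos hK0 ((r+1)*m)).le ht]
            exact mul_le_mul_of_nonneg_right h2 hψμ0.le
  · -- R b = 1 when some Q i₀ b = 1
    rintro b ⟨i₀, hi₀⟩
    rw [hR]
    simp only
    rw [Finset.prod_eq_zero (Finset.mem_univ i₀) (by rw [hi₀]; simp), sub_zero]
  · -- derivatives vanish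
    intro hsm a hvan
    -- auxiliary: for every finset s, F_s = ∏_{i ∈ s} (1 - Q i)^(r+1) - 1 has vanishing derivs
    have hsm' : ∀ i : Fin m, ContDiff ℝ ∞ (Q i) := fun i => (hsm i).of_le (by simp)
    have hsmQ : ∀ i : Fin m, ContDiff ℝ ∞ (fun x => (1 - Q i x) ^ (r+1)) :=
      fun i => (contDiff_const.sub (hsm' i)).pow _
    have hmain : ∀ s : Finset (Fin m), ∀ ν, ν ≤ r →
        iteratedDeriv ν (fun x => (∏ i ∈ s, (1 - Q i x) ^ (r+1)) - 1) a = 0 := by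
      intro s
      induction s using Finset.cons_induction with
      | empty =>
        intro ν hν
        simp only [Finset.prod_empty, sub_self]
        simp [iteratedDeriv, iteratedFDeriv_zero_fun]
      | cons j s hj ih =>
        intro ν hν
        have hsmP : ContDiff ℝ ∞ (fun x => ∏ i ∈ s, (1 - Q i x) ^ (r+1)) :=
          contDiff_prod (fun i _ => hsmQ i)
        have hsmF : ContDiff ℝ ∞ (fun x => (∏ i ∈ s, (1 - Q i x) ^ (r+1)) - 1) :=
          hsmP.sub contDiff_const
        have hA : ∀ ν, ν ≤ r → iteratedDeriv ν
            (fun x => ((∏ i ∈ s, (1 - Q i x) ^ (r+1)) - 1) * (1 - Q j x) ^ (r+1)) a = 0 :=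
          mul_vanish a r _ _ hsmF (hsmQ j) ih
        have hBexp : ∀ x : ℝ, (1 - Q j x) ^ (r+1) - 1 =
            Q j x * (-(∑ i ∈ Finset.range (r+1), (1 - Q j x) ^ i)) := by
          intro x
          have h := geom_sum_mul (1 - Q j x) (r+1)
          have : (1 - Q j x) - 1 = -(Q j x) := by ring
          rw [this] at h
          rw [← h]; ring
        have hsmS : ContDiff ℝ ∞ (fun x => -(∑ i ∈ Finset.range (r+1), (1 - Q j x) ^ i)) := by
          apply ContDiff.neg
          apply ContDiff.sum
          intro i _
          exact (contDiff_const.sub (hsm' j)).pow _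
        have hB : ∀ ν, ν ≤ r → iteratedDeriv ν
            (fun x => Q j x * (-(∑ i ∈ Finset.range (r+1), (1 - Q j x) ^ i))) a = 0 :=
          mul_vanish a r _ _ (hsm' j) hsmS (fun ν hν' => hvan j ν hν')
        have heq : (fun x => (∏ i ∈ Finset.cons j s hj, (1 - Q i x) ^ (r+1)) - 1) =
            (fun x => ((∏ i ∈ s, (1 - Q i x) ^ (r+1)) - 1) * (1 - Q j x) ^ (r+1) +
              Q j x * (-(∑ i ∈ Finset.range (r+1), (1 - Q j x) ^ i))) := by
          funext x
          rw [Finset.prod_cons, ← hBexp x]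
          ring
        rw [heq, iterDeriv_add' _ _ (hsmF.mul (hsmQ j)) ((hsm' j).mul hsmS) ν a,
          hA ν hν, hB ν hν, add_zero]
    intro ν hν
    have hReq : R = fun x => -(((∏ i : Fin m, (1 - Q i x) ^ (r+1)) - 1)) := by
      rw [hR]; funext x; ring
    rw [hReq, iteratedDeriv_fun_neg, hmain Finset.univ ν hν, neg_zero]
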